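/- arXiv:1707.00956 — 2 statements merged into one kernel-verified Lean document; each statement's English description precedes it below -/
import Mathlib

section
/- Let p be an odd prime, k ≥ 1 an integer, and b ∈ ℤ_p a p-adic unit. Then there exists a p-adic unit c ∈ ℤ_p^× such that 1 + b·p^k = (1 + p·c)^{p^{k-1}} in ℤ_p. -/
/-! Induction on `k`. Since `p` is odd, `(1 + p^k X)^p = 1 + p^(k+1) (X + p^k H(X))` for some
polynomial `H`, and by Hensel's lemma `z ↦ z + p^k H(z)` is onto, moving `z` only by a non-unit.
Hence `1 + b p^(k+1) = (1 + z p^k)^p` with `z` a unit, and the induction hypothesis applied to `z`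
finishes the step. -/

open Polynomial

theorem exists_one_add_C_mul_X_pow_prime {R : Type*} [CommRing R] {p : ℕ} (hp : p.Prime) (a : R) :
    ∃ Q : R[X], (1 + C a * X) ^ p = 1 + C (p * a) * X + C (p * a ^ 2) * Q + C (a ^ p) * X ^ p := by
  obtain ⟨n, rfl⟩ : ∃ n, p = n + 2 := ⟨p - 2, by have := hp.two_le; omega⟩
  have hmiddle : C ((n + 2 : ℕ) * a ^ 2) ∣ ∑ i ∈ Finset.range n,
      (C a * X) ^ (i + 2) * 1 ^ (n + 2 - (i + 2)) * ((n + 2).choose (i + 2) : R[X]) := by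
    refine Finset.dvd_sum fun i hi => ?_
    have hi : i < n := Finset.mem_range.mp hi
    obtain ⟨t, ht⟩ := hp.dvd_choose_self (k := i + 2) (by omega) (by omega)
    refine ⟨(C a * X) ^ i * X ^ 2 * (t : R[X]), ?_⟩
    rw [ht, ← C_eq_natCast, one_pow, mul_one]
    simp only [map_mul, map_pow, map_natCast, Nat.cast_mul]
    ring
  obtain ⟨Q, hQ⟩ := hmiddle
  refine ⟨Q, ?_⟩
  rw [add_comm, add_pow, Finset.sum_range_succ, Finset.sum_range_succ', Finset.sum_range_succ', hQ]
  simp only [map_mul, map_pow, map_natCast]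
  simp only [Nat.cast_add, Nat.cast_ofNat, zero_add, pow_one, Nat.add_one_sub_one, one_pow,
    mul_one, Nat.choose_one_right, pow_zero, tsub_zero, Nat.choose_zero_right, Nat.cast_one,
    tsub_self, Nat.choose_self]
  ring

namespace PadicInt

variable {p : ℕ} [Fact p.Prime]

theorem exists_one_add_C_p_pow_mul_X_pow_prime (hp : Odd p) {k : ℕ} (hk : 1 ≤ k) :
    ∃ H : ℤ_[p][X], (1 + C ((p : ℤ_[p]) ^ k) * X) ^ p
      = 1 + C ((p : ℤ_[p]) ^ (k + 1)) * (X + C ((p : ℤ_[p]) ^ k) * H) := by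
  have hp3 : 3 ≤ p := (Fact.out : p.Prime).two_le.lt_of_ne (by rintro rfl; norm_num at hp)
  obtain ⟨Q, hQ⟩ := exists_one_add_C_mul_X_pow_prime (Fact.out : p.Prime) ((p : ℤ_[p]) ^ k)
  -- Oddness enters here: `p ≥ 3` makes the top term `p ^ (k * p) X ^ p` divisible by `p ^ (2k+1)`.
  obtain ⟨e, he⟩ : ∃ e, k * p = 2 * k + 1 + e :=
    ⟨k * p - (2 * k + 1), by have := Nat.mul_le_mul_left k hp3; omega⟩
  refine ⟨Q + C ((p : ℤ_[p]) ^ e) * X ^ p, ?_⟩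
  rw [hQ, ← pow_mul _ k p, he]
  simp only [map_mul, map_pow]
  ring

theorem norm_add_eq_one {u y : ℤ_[p]} (hu : ‖u‖ = 1) (hy : ‖y‖ < 1) : ‖u + y‖ = 1 := by
  rw [IsUltrametricDist.norm_add_eq_max_of_norm_ne_norm (by rw [hu]; exact hy.ne'), hu,
    max_eq_left hy.le]

theorem norm_mul_lt_one {x : ℤ_[p]} (hx : ‖x‖ < 1) (y : ℤ_[p]) : ‖x * y‖ < 1 := by
  rw [norm_mul]
  exact mul_lt_one_of_nonneg_of_lt_one_left (norm_nonneg x) hx (norm_le_one y)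

theorem exists_add_mul_eval_eq {x : ℤ_[p]} (hx : ‖x‖ < 1) (H : ℤ_[p][X]) (b : ℤ_[p]) :
    ∃ z, z + x * H.eval z = b ∧ ‖z - b‖ < 1 := by
  set F : ℤ_[p][X] := X + C x * H - C b
  have hF' : ‖F.derivative.eval b‖ = 1 := by
    simp only [F, derivative_sub, derivative_add, derivative_X, derivative_C_mul, derivative_C,
      sub_zero, eval_add, eval_one, eval_mul, eval_C]
    exact norm_add_eq_one norm_one (norm_mul_lt_one hx _)
  have hFb : ‖F.eval b‖ < ‖F.derivative.eval b‖ ^ 2 := by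
    rw [hF', one_pow]
    simpa [F] using norm_mul_lt_one hx (H.eval b)
  obtain ⟨z, hFz, hzb, -⟩ := hensels_lemma (F := F) (a := b) hFb
  simp only [coe_aeval_eq_eval, hF'] at hFz hzb
  refine ⟨z, ?_, hzb⟩
  simpa [F, sub_eq_zero] using hFz

theorem exists_unit_one_add_mul_p_pow_pow_prime_eq (hp : Odd p) {k : ℕ} (hk : 1 ≤ k)
    (b : ℤ_[p]ˣ) : ∃ z : ℤ_[p]ˣ, (1 + (z : ℤ_[p]) * p ^ k) ^ p = 1 + b * (p : ℤ_[p]) ^ (k + 1) := by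
  obtain ⟨H, hH⟩ := exists_one_add_C_p_pow_mul_X_pow_prime hp hk
  have hpk : ‖(p : ℤ_[p]) ^ k‖ < 1 :=
    (norm_lt_one_iff_dvd _).mpr (dvd_pow_self _ (by omega))
  obtain ⟨z, hz, hzb⟩ := exists_add_mul_eval_eq hpk H b
  have hzunit : IsUnit z :=
    isUnit_iff.mpr (by simpa using norm_add_eq_one (norm_units b) hzb)
  refine ⟨hzunit.unit, ?_⟩
  have hHz := congrArg (eval z) hH
  simp only [eval_add, eval_mul, eval_pow, eval_one, eval_C, eval_X] at hHz
  rw [IsUnit.unit_spec, mul_comm, hHz, hz, mul_comm]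

end PadicInt

theorem stmt_0 (p : ℕ) [Fact p.Prime] (hp : Odd p) (k : ℕ) (hk : 1 ≤ k) (b : ℤ_[p]ˣ) :
    ∃ c : ℤ_[p]ˣ, (1 + (b : ℤ_[p]) * (p : ℤ_[p]) ^ k) = (1 + (p : ℤ_[p]) * c) ^ (p ^ (k - 1)) := by
  induction k, hk using Nat.le_induction generalizing b with
  | base => exact ⟨b, by simp [mul_comm]⟩
  | succ k hk ih =>
    obtain ⟨z, hz⟩ := PadicInt.exists_unit_one_add_mul_p_pow_pow_prime_eq hp hk b
    obtain ⟨c, hc⟩ := ih z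
    refine ⟨c, ?_⟩
    rw [Nat.add_sub_cancel, ← pow_sub_one_mul (show k ≠ 0 by omega) p, pow_mul, ← hc, hz]
end

section
/- Let p be an odd prime, n ≥ 1, and set x = 1 + p^n ∈ ℤ_p and θ(x) = (x − x^p)/p. Then the convergent sum log(x) := ∑_{k=1}^∞ (−1)^{k-1} (p^{k-1}/k)(θ(x)/x^p)^k satisfies log(1 + p^n) ≡ p^{n-1} (mod p^n). -/
lemma aux_norm_nat_ge (p : ℕ) [Fact p.Prime] (m : ℕ) (hm : 1 ≤ m) :
    ((m:ℝ))⁻¹ ≤ ‖((m:ℕ) : ℚ_[p])‖ := by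
  have hpp : p.Prime := Fact.out
  have hm0 : (m : ℚ_[p]) ≠ 0 := Nat.cast_ne_zero.mpr (by omega)
  rw [Padic.norm_eq_zpow_neg_valuation hm0, Padic.valuation_natCast]
  have hle : (p:ℕ) ^ padicValNat p m ≤ m := Nat.le_of_dvd (by omega) pow_padicValNat_dvd
  rw [zpow_neg, zpow_natCast]
  have hp : (0:ℝ) < (p:ℝ)^padicValNat p m := by
    have := hpp.pos; positivity
  apply inv_anti₀ hp
  exact_mod_cast hle

lemma aux_three_pow (k : ℕ) : k + 2 < 3 ^ (k+1) := by
  induction k with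
  | zero => norm_num
  | succ k ih => rw [pow_succ]; omega

lemma aux_norm_nat_ge' (p : ℕ) [Fact p.Prime] (hp3 : 3 ≤ p) (k : ℕ) :
    (p:ℝ) ^ (-(k:ℤ)) ≤ ‖((k + 2 : ℕ) : ℚ_[p])‖ := by
  have hpp : p.Prime := Fact.out
  have hv : padicValNat p (k+2) ≤ k := by
    by_contra h
    push_neg at h
    have hd : p ^ (k+1) ∣ k + 2 :=
      dvd_trans (pow_dvd_pow p h) pow_padicValNat_dvd
    have h1 := Nat.le_of_dvd (by omega) hd
    have h2 : 3 ^ (k+1) ≤ p ^ (k+1) := Nat.pow_le_pow_left hp3 _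
    have := aux_three_pow k
    omega
  have hm0 : ((k+2 : ℕ) : ℚ_[p]) ≠ 0 := Nat.cast_ne_zero.mpr (by omega)
  rw [Padic.norm_eq_zpow_neg_valuation hm0, Padic.valuation_natCast]
  have h1 : (1:ℝ) < (p:ℝ) := by exact_mod_cast hpp.one_lt
  apply zpow_le_zpow_right₀ h1.le
  omega

lemma aux_dvd (p : ℕ) (hpp : p.Prime) (n : ℕ) (hn : 1 ≤ n) :
    (p:ℤ) ^ (n+1) ∣ ((1 + (p:ℤ)^n)^p - 1) := by
  have h := add_pow ((p:ℤ)^n) 1 p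
  rw [Finset.sum_range_succ'] at h
  simp only [one_pow, mul_one, pow_zero, Nat.choose_zero_right, Nat.cast_one, one_mul] at h
  rw [add_comm (1:ℤ), h, add_sub_cancel_right]
  apply Finset.dvd_sum
  intro k hk
  have hk1 : k + 1 ≤ p := Finset.mem_range.mp hk
  have hp2 : 2 ≤ p := hpp.two_le
  rcases eq_or_lt_of_le hk1 with he | hlt
  · rw [he, Nat.choose_self]
    simp only [Nat.cast_one, mul_one]
    rw [← pow_mul]
    exact pow_dvd_pow _ (by nlinarith)
  · have hc : (p:ℤ) ∣ (p.choose (k+1) : ℤ) :=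
      Int.natCast_dvd_natCast.mpr (hpp.dvd_choose_self (by omega) hlt)
    rw [pow_succ]
    exact mul_dvd_mul (dvd_pow_self _ (Nat.succ_ne_zero k)) hc

theorem stmt_5 (p : ℕ) [Fact p.Prime] (hp : Odd p) (n : ℕ) (hn : 1 ≤ n) :
    let x : ℚ_[p] := 1 + (p : ℚ_[p]) ^ n
    let θx : ℚ_[p] := (x - x ^ p) / p
    ‖(∑' k : ℕ, (-1 : ℚ_[p]) ^ k * ((p : ℚ_[p]) ^ k / ((k : ℚ_[p]) + 1)) * (θx / x ^ p) ^ (k + 1))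
        - (p : ℚ_[p]) ^ (n - 1)‖ ≤ ‖(p : ℚ_[p]) ^ n‖ := by
  intro x θx
  have hpp : p.Prime := Fact.out
  have hp3 : 3 ≤ p := by
    have h1 := Nat.odd_iff.mp hp
    have h2 := hpp.two_le
    omega
  have hP1 : (1:ℝ) < (p:ℝ) := by exact_mod_cast hpp.one_lt
  have hP0 : (0:ℝ) < (p:ℝ) := by linarith
  have hp0 : (p : ℚ_[p]) ≠ 0 := by
    exact_mod_cast (Nat.cast_ne_zero (R := ℚ_[p])).mpr hpp.pos.ne'
  have hxdef : x = 1 + (p : ℚ_[p]) ^ n := rfl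
  have hθdef : θx = (x - x ^ p) / p := rfl
  clear_value x θx
  set N : ℤ := (n : ℤ) with hN
  have hN1 : 1 ≤ N := by rw [hN]; exact_mod_cast hn
  -- norm of x^p - 1
  have hxp1 : ‖x ^ p - 1‖ ≤ (p:ℝ) ^ (-(N+1)) := by
    have hcast : ((((1 + (p:ℤ)^n)^p - 1 : ℤ)) : ℚ_[p]) = x ^ p - 1 := by
      push_cast [hxdef]; ring
    rw [← hcast]
    have h2 := (Padic.norm_int_le_pow_iff_dvd (p := p) ((1 + (p:ℤ)^n)^p - 1) (n+1)).mpr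
      (aux_dvd p hpp n hn)
    calc ‖(((1 + (p:ℤ)^n)^p - 1 : ℤ) : ℚ_[p])‖ ≤ (p:ℝ) ^ (-((n+1:ℕ)):ℤ) := h2
    _ = (p:ℝ) ^ (-(N+1)) := by rw [hN]; norm_cast
  -- norm of x is 1
  have hx1 : ‖x‖ = 1 := by
    rw [hxdef, Padic.add_eq_max_of_ne, norm_one]
    · rw [max_eq_left]
      rw [Padic.norm_p_pow]
      apply zpow_le_one_of_nonpos₀ hP1.le; omega
    · rw [norm_one, Padic.norm_p_pow]
      intro h
      have : (p:ℝ) ^ (-(n:ℤ)) < 1 := by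
        apply zpow_lt_one_of_neg₀ hP1; omega
      rw [h] at this; exact lt_irrefl _ this
  have hxpn : ‖x ^ p‖ = 1 := by rw [norm_pow, hx1, one_pow]
  have hxp0 : x ^ p ≠ 0 := by
    intro h; rw [h, norm_zero] at hxpn; norm_num at hxpn
  set c : ℚ_[p] := (p : ℚ_[p]) ^ (n-1) with hc
  clear_value c
  have hcn : ‖c‖ = (p:ℝ) ^ (1 - N) := by
    rw [hc, Padic.norm_p_pow]
    congr 1; omega
  -- θx - c
  have hθc : ‖θx - c‖ ≤ (p:ℝ) ^ (-N) := by
    have hid : θx - c = (1 - x ^ p) / p := by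
      rw [hθdef, hc, div_sub' hp0]
      congr 1
      have hmul : (p:ℚ_[p]) * (p:ℚ_[p])^(n-1) = (p:ℚ_[p])^n := by
        rw [mul_comm, ← pow_succ]; congr 1; omega
      rw [hmul, hxdef]; ring
    rw [hid, norm_div, Padic.norm_p, norm_sub_rev]
    calc ‖x ^ p - 1‖ / (p:ℝ)⁻¹ ≤ (p:ℝ) ^ (-(N+1)) / (p:ℝ)⁻¹ := by
          apply div_le_div_of_nonneg_right hxp1 (by positivity)
    _ = (p:ℝ) ^ (-N) := by
          rw [div_inv_eq_mul]
          nth_rewrite 2 [show (p:ℝ) = (p:ℝ)^(1:ℤ) from (zpow_one _).symm]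
          rw [← zpow_add₀ hP0.ne']
          congr 1; ring
  have hθ : ‖θx‖ ≤ (p:ℝ) ^ (1-N) := by
    have := Padic.nonarchimedean (θx - c) c
    rw [sub_add_cancel] at this
    refine this.trans (max_le ?_ (le_of_eq hcn))
    refine hθc.trans ?_
    apply zpow_le_zpow_right₀ hP1.le; omega
  set y : ℚ_[p] := θx / x ^ p with hy
  clear_value y
  have hyn : ‖y‖ ≤ (p:ℝ) ^ (1-N) := by
    rw [hy, norm_div, hxpn, div_one]; exact hθ
  have hyc : ‖y - c‖ ≤ (p:ℝ) ^ (-N) := by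
    have hid : y - c = ((θx - c) - c * (x ^ p - 1)) / x ^ p := by
      rw [hy, eq_div_iff hxp0, sub_mul, div_mul_cancel₀ _ hxp0]
      ring
    rw [hid, norm_div, hxpn, div_one, sub_eq_add_neg]
    refine (Padic.nonarchimedean _ _).trans (max_le hθc ?_)
    · rw [norm_neg, norm_mul, hcn]
      calc (p:ℝ)^(1-N) * ‖x ^ p - 1‖ ≤ (p:ℝ)^(1-N) * (p:ℝ)^(-(N+1)) := by
            apply mul_le_mul_of_nonneg_left hxp1 (by positivity)
      _ = (p:ℝ) ^ (-2*N) := by rw [← zpow_add₀ hP0.ne']; congr 1; ring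
      _ ≤ (p:ℝ) ^ (-N) := by apply zpow_le_zpow_right₀ hP1.le; omega
  -- the terms
  set f : ℕ → ℚ_[p] := fun k => (-1 : ℚ_[p]) ^ k * ((p : ℚ_[p]) ^ k / ((k : ℚ_[p]) + 1)) * y ^ (k + 1) with hf
  clear_value f
  have hf0 : f 0 = y := by simp [hf]
  have hfnorm : ∀ k, ‖f k‖ = ‖(p : ℚ_[p]) ^ k / ((k : ℚ_[p]) + 1)‖ * ‖y‖ ^ (k+1) := by
    intro k
    rw [hf]
    simp only [norm_mul, norm_pow, norm_neg, norm_one, one_pow, one_mul]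
  -- tail bound
  have hfk : ∀ k : ℕ, ‖f (k+1)‖ ≤ (p:ℝ) ^ (-N) := by
    intro k
    rw [hfnorm]
    have hden : ((k+1 : ℕ) : ℚ_[p]) + 1 = (((k+2 : ℕ)) : ℚ_[p]) := by push_cast; ring
    rw [hden]
    have hA : ‖(p : ℚ_[p]) ^ (k+1) / (((k+2:ℕ)) : ℚ_[p])‖ ≤ (p:ℝ)⁻¹ := by
      rw [norm_div, Padic.norm_p_pow]
      rw [div_le_iff₀ (by
        have := aux_norm_nat_ge' p hp3 k
        have h2 : (0:ℝ) < (p:ℝ) ^ (-(k:ℤ)) := by positivity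
        linarith)]
      calc (p:ℝ) ^ (-((k+1:ℕ)):ℤ) = (p:ℝ)⁻¹ * (p:ℝ)^(-(k:ℤ)) := by
            rw [← zpow_neg_one, ← zpow_add₀ hP0.ne']; congr 1; push_cast; ring
      _ ≤ (p:ℝ)⁻¹ * ‖(((k+2:ℕ)) : ℚ_[p])‖ := by
            apply mul_le_mul_of_nonneg_left (aux_norm_nat_ge' p hp3 k) (by positivity)
    have hB : ‖y‖ ^ (k+1+1) ≤ (p:ℝ) ^ (1-N) := by
      calc ‖y‖ ^ (k+2) ≤ ((p:ℝ) ^ (1-N)) ^ (k+2) :=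
            pow_le_pow_left₀ (norm_nonneg _) hyn _
      _ ≤ ((p:ℝ) ^ (1-N)) ^ 1 := by
            apply pow_le_pow_of_le_one (by positivity) ?_ (by omega)
            apply zpow_le_one_of_nonpos₀ hP1.le; omega
      _ = (p:ℝ) ^ (1-N) := pow_one _
    calc ‖(p : ℚ_[p]) ^ (k+1) / (((k+2:ℕ)) : ℚ_[p])‖ * ‖y‖ ^ (k+1+1)
        ≤ (p:ℝ)⁻¹ * (p:ℝ)^(1-N) := by
          apply mul_le_mul hA hB (by positivity) (by positivity)
    _ = (p:ℝ) ^ (-N) := by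
          rw [← zpow_neg_one, ← zpow_add₀ hP0.ne']; congr 1; ring
  -- summability
  have hsum : Summable f := by
    refine Summable.of_norm_bounded (g := fun k => ((k:ℝ)+1) * ((p:ℝ)⁻¹)^k) ?_ ?_
    · have h1 : Summable (fun k : ℕ => ((k:ℝ)) * ((p:ℝ)⁻¹)^k) := by
        have := summable_pow_mul_geometric_of_norm_lt_one (R := ℝ) 1 (r := (p:ℝ)⁻¹)
          (by rw [Real.norm_eq_abs, abs_of_pos (by positivity)]; exact inv_lt_one_of_one_lt₀ hP1)
        simpa using this
      have h2 : Summable (fun k : ℕ => ((p:ℝ)⁻¹)^k) :=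
        summable_geometric_of_lt_one (by positivity) (inv_lt_one_of_one_lt₀ hP1)
      simpa [add_mul] using h1.add h2
    · intro k
      rw [hfnorm, norm_div, Padic.norm_p_pow]
      have hden : ((k : ℚ_[p]) + 1) = (((k+1 : ℕ)) : ℚ_[p]) := by push_cast; ring
      rw [hden]
      have hge := aux_norm_nat_ge p (k+1) (by omega)
      have hge0 : (0:ℝ) < ‖(((k+1:ℕ)) : ℚ_[p])‖ := lt_of_lt_of_le (by positivity) hge
      have hy1 : ‖y‖ ≤ 1 := hyn.trans (zpow_le_one_of_nonpos₀ hP1.le (by omega))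
      calc (p:ℝ) ^ (-(k:ℤ)) / ‖(((k+1:ℕ)) : ℚ_[p])‖ * ‖y‖ ^ (k+1)
          ≤ (p:ℝ) ^ (-(k:ℤ)) / ‖(((k+1:ℕ)) : ℚ_[p])‖ * 1 := by
            apply mul_le_mul_of_nonneg_left (pow_le_one₀ (norm_nonneg _) hy1) (by positivity)
      _ = (p:ℝ) ^ (-(k:ℤ)) / ‖(((k+1:ℕ)) : ℚ_[p])‖ := mul_one _
      _ ≤ (p:ℝ) ^ (-(k:ℤ)) * ((k:ℝ)+1) := by
            rw [div_le_iff₀ hge0]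
            calc (p:ℝ) ^ (-(k:ℤ)) = ((k:ℝ)+1) * (((k:ℝ)+1)⁻¹ * (p:ℝ)^(-(k:ℤ))) := by
                  field_simp
            _ ≤ ((k:ℝ)+1) * (‖(((k+1:ℕ)) : ℚ_[p])‖ * (p:ℝ)^(-(k:ℤ))) := by
                  apply mul_le_mul_of_nonneg_left ?_ (by positivity)
                  apply mul_le_mul_of_nonneg_right ?_ (by positivity)
                  calc ((k:ℝ)+1)⁻¹ = (((k+1:ℕ):ℝ))⁻¹ := by push_cast; ring
                  _ ≤ _ := hge
            _ = (p:ℝ)^(-(k:ℤ)) * ((k:ℝ)+1) * ‖(((k+1:ℕ)) : ℚ_[p])‖ := by ring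
      _ = ((k:ℝ)+1) * ((p:ℝ)⁻¹)^k := by
            rw [inv_pow, ← zpow_natCast (p:ℝ) k, ← zpow_neg]; ring
  -- conclude
  rw [hsum.tsum_eq_zero_add]
  rw [Padic.norm_p_pow]
  have : f 0 + (∑' k, f (k+1)) - c = (f 0 - c) + (∑' k, f (k+1)) := by ring
  rw [this]
  refine (Padic.nonarchimedean _ _).trans (max_le ?_ ?_)
  · rw [hf0]; exact hyc
  · exact IsUltrametricDist.norm_tsum_le_of_forall_le_of_nonneg (by positivity) hfk
end
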